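/- Bounding construction, finite case: Let U_1 and U_2 be TA templates with conjunctive guards, and let x be a finite timed computation of (U_1,U_2)^{(1,n)} with n ≥ 1. Then the sequence y defined by y(1,1) = x(1,1), y(2,1) = x(2,1), in which every synchronization step of x taken by an instance U_2^i with i ≥ 2 is replaced by keeping the configuration unchanged, is a finite timed computation of (U_1,U_2)^{(1,1)} that preserves the local timed computations of U_1^1 and U_2^1. -/

import Mathlib

open scoped ENNReal NNReal

namespace PNTA

/-! ### Basic ingredients: comparisons and clock constraints -/

/-- Comparison operators `<, ≤, >, ≥, =`. -/
inductive Cmp : Type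
  | lt | le | gt | ge | eq

/-- Evaluation of a comparison operator on nonnegative reals. -/
def Cmp.eval : Cmp → NNReal → NNReal → Prop
  | .lt, a, b => a < b
  | .le, a, b => a ≤ b
  | .gt, a, b => b < a
  | .ge, a, b => b ≤ a
  | .eq, a, b => a = b

/-- Clock constraints `TC(C)`: Boolean combinations of comparisons of clocks with
clocks or with nonnegative rational constants. -/
inductive ClockConstraint (C : Type) : Type
  | tt
  | neg (g : ClockConstraint C)
  | disj (g₁ g₂ : ClockConstraint C)
  | cmpClock (op : Cmp) (c₁ c₂ : C)
  | cmpConst (op : Cmp) (c : C) (q : ℚ≥0)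

/-- Satisfaction of a clock constraint by a clock valuation. -/
def ClockConstraint.sat {C : Type} (u : C → NNReal) : ClockConstraint C → Prop
  | .tt => True
  | .neg g => ¬ g.sat u
  | .disj g₁ g₂ => g₁.sat u ∨ g₂.sat u
  | .cmpClock op c₁ c₂ => op.eval (u c₁) (u c₂)
  | .cmpConst op c q => op.eval (u c) (q : NNReal)

/-! ### Parameterized networks of timed automata with conjunctive guards -/

/-- A parameterized network of `k` timed automaton templates
`U_l = ⟨S_l, ŝ_l, C_l, Γ_l, τ_l, I_l⟩` with **conjunctive guards**.
A conjunctive guard assigns to every template `h` a set of states of `U_h`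
(the disjunction `ŝ_h ∨ s_h¹ ∨ ⋯`), which must contain the initial state `ŝ_h`;
it is satisfied by a global state when every *other* instance of every template `h`
is in a state belonging to the corresponding set. -/
structure ConjPNTA (k : ℕ) : Type 1 where
  /-- states of each template -/
  State : Fin k → Type
  stateFintype : ∀ l, Fintype (State l)
  /-- initial state of each template -/
  init : ∀ l, State l
  /-- clock variables of each template -/
  Clock : Fin k → Type
  clockFintype : ∀ l, Fintype (Clock l)
  /-- transitions `s —(g,r,γ)→ t`: source, clock constraint, reset set, conjunctive guard, target -/
  trans : ∀ l, Set (State l × ClockConstraint (Clock l) × Set (Clock l) ×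
      ((h : Fin k) → Set (State h)) × State l)
  trans_finite : ∀ l, (trans l).Finite
  /-- guards are conjunctive: every disjunct contains the initial state -/
  guards_conj : ∀ l tr, tr ∈ trans l → ∀ h, init h ∈ tr.2.2.2.1 h
  /-- state invariants -/
  inv : ∀ l, State l → ClockConstraint (Clock l)
  inv_init : ∀ l, inv l (init l) = ClockConstraint.tt

variable {k : ℕ}

/-- `|U_l|`: the number of states of template `l`. -/
def ConjPNTA.size (A : ConjPNTA k) (l : Fin k) : ℕ :=
  @Fintype.card (A.State l) (A.stateFintype l)

lemma ConjPNTA.size_pos (A : ConjPNTA k) (l : Fin k) : 0 < A.size l :=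
  @Fintype.card_pos _ (A.stateFintype l) ⟨A.init l⟩

/-- A configuration of the PNTA `(U_1,…,U_k)^{(n_1,…,n_k)}`: each instance `U_l^i`
(`l < k`, `i < n_l`) has a current state and a clock valuation satisfying the
invariant of that state. -/
structure Config (A : ConjPNTA k) (n : Fin k → ℕ) : Type where
  st : ∀ l, Fin (n l) → A.State l
  cl : ∀ l, Fin (n l) → A.Clock l → NNReal
  inv_sat : ∀ l i, (A.inv l (st l i)).sat (cl l i)

/-- The initial configuration: every instance in its initial state, all clocks `0`. -/
def initConfig (A : ConjPNTA k) (n : Fin k → ℕ) : Config A n where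
  st := fun l _ => A.init l
  cl := fun _ _ _ => 0
  inv_sat := fun l _ => by rw [A.inv_init l]; exact trivial

/-- The global state of configuration `c` satisfies the conjunctive guard `γ`
from the point of view of instance `(l, i)`: every other instance is in one of
the allowed states. -/
def guardSat {A : ConjPNTA k} {n : Fin k → ℕ} (c : Config A n) (l : Fin k) (i : Fin (n l))
    (γ : (h : Fin k) → Set (A.State h)) : Prop :=
  ∀ p : Σ h, Fin (n h), p ≠ ⟨l, i⟩ → c.st p.1 p.2 ∈ γ p.1

/-- Delay transition `c →d c'`: all clocks of all instances advance by `d`,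
states are unchanged, and all invariants hold throughout the delay. -/
def DelayStep {A : ConjPNTA k} {n : Fin k → ℕ} (d : NNReal) (c c' : Config A n) : Prop :=
  c'.st = c.st ∧
  (∀ l i x, c'.cl l i x = c.cl l i x + d) ∧
  (∀ l i (d' : NNReal), d' ≤ d → (A.inv l (c.st l i)).sat fun x => c.cl l i x + d')

/-- Synchronization transition `c →γ c'`: exactly one instance `U_l^i` fires a
transition `s —(g,r,γ)→ t` of `τ_l`; its current state is `s`, its clocks satisfy `g`,
the global state satisfies the conjunctive guard `γ`, its clocks in `r` are reset to 0,
and all other instances are unchanged. -/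
def SyncStep {A : ConjPNTA k} {n : Fin k → ℕ} (c c' : Config A n) : Prop :=
  ∃ (l : Fin k) (i : Fin (n l)), ∃ tr ∈ A.trans l,
    tr.1 = c.st l i ∧
    tr.2.1.sat (c.cl l i) ∧
    guardSat c l i tr.2.2.2.1 ∧
    c'.st l i = tr.2.2.2.2 ∧
    (∀ x, (x ∈ tr.2.2.1 → c'.cl l i x = 0) ∧ (x ∉ tr.2.2.1 → c'.cl l i x = c.cl l i x)) ∧
    (∀ p : Σ h, Fin (n h), p ≠ ⟨l, i⟩ → c'.st p.1 p.2 = c.st p.1 p.2 ∧ c'.cl p.1 p.2 = c.cl p.1 p.2)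

/-- A step of a timed computation: a delay transition with positive delay
(time advances accordingly) or a synchronization transition (time unchanged). -/
def Step {A : ConjPNTA k} {n : Fin k → ℕ} (c c' : Config A n) (t t' : NNReal) : Prop :=
  (∃ d : NNReal, 0 < d ∧ DelayStep d c c' ∧ t' = t + d) ∨ (SyncStep c c' ∧ t' = t)

/-- A timed computation starting at configuration `c₀` at time `0`: a finite or
infinite sequence of configuration/time pairs (represented as a partial function
on positions with downward closed domain) whose consecutive elements are related
by delay or synchronization transitions. -/
structure TimedComp (A : ConjPNTA k) (n : Fin k → ℕ) (c₀ : Config A n) : Type where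
  seq : ℕ → Option (Config A n × NNReal)
  zero_def : seq 0 = some (c₀, 0)
  downward : ∀ v, (seq (v + 1)).isSome → (seq v).isSome
  step : ∀ v c t c' t', seq v = some (c, t) → seq (v + 1) = some (c', t') → Step c c' t t'

namespace TimedComp

variable {A : ConjPNTA k} {n : Fin k → ℕ} {c₀ : Config A n}

/-- An infinite timed computation. -/
def Infinite (x : TimedComp A n c₀) : Prop := ∀ v, (x.seq v).isSome

/-- A (not necessarily maximal) finite timed computation. -/
def Finite (x : TimedComp A n c₀) : Prop := ∃ v, x.seq v = none

/-- A deadlocked timed computation: maximal finite, i.e. all transitions are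
disabled at its final configuration. -/
def Deadlocked (x : TimedComp A n c₀) : Prop :=
  ∃ v c t, x.seq v = some (c, t) ∧ x.seq (v + 1) = none ∧
    ∀ c' : Config A n, ¬ ((∃ d : NNReal, 0 < d ∧ DelayStep d c c') ∨ SyncStep c c')

/-- The time stamp at position `v` (junk value `0` outside the domain). -/
def timeAt (x : TimedComp A n c₀) (v : ℕ) : NNReal := ((x.seq v).map Prod.snd).getD 0

end TimedComp

/-! ### s-paths (continuous-time signals induced by timed computations) -/

/-- An s-path: a continuous-time signal of configurations, together with its
(possibly infinite) length. -/
structure SPath (A : ConjPNTA k) (n : Fin k → ℕ) : Type where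
  len : ℝ≥0∞
  toFun : NNReal → Config A n

/-- The suffix `ρ⌊t` of an s-path. -/
noncomputable def SPath.suffix {A : ConjPNTA k} {n : Fin k → ℕ} (ρ : SPath A n) (t : NNReal) : SPath A n where
  len := ρ.len - (t : ℝ≥0∞)
  toFun := fun s => ρ.toFun (t + s)

/-- The timed computation `x` induces the s-path `ρ`: for every step of `x` from
`(c_v,t_v)` to `(c_{v+1},t_{v+1})` and every time `s ∈ [t_v, t_{v+1})`, `ρ(s)` has
the states of `c_v` with clocks advanced by `s - t_v`; the length of `ρ` is the
supremum of the time stamps (for an infinite computation), resp. the final time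
stamp (for a finite one, at which the final configuration persists). -/
def Induces {A : ConjPNTA k} {n : Fin k → ℕ} {c₀ : Config A n}
    (x : TimedComp A n c₀) (ρ : SPath A n) : Prop :=
  (∀ v c t c' t', x.seq v = some (c, t) → x.seq (v + 1) = some (c', t') →
    ∀ s : NNReal, t ≤ s → s < t' →
      (ρ.toFun s).st = c.st ∧ ∀ l i cx, (ρ.toFun s).cl l i cx = c.cl l i cx + (s - t)) ∧
  (x.Infinite → ρ.len = ⨆ v, (x.timeAt v : ℝ≥0∞)) ∧
  (∀ v c t, x.seq v = some (c, t) → x.seq (v + 1) = none →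
    ρ.len = (t : ℝ≥0∞) ∧ (ρ.toFun t).st = c.st ∧ ∀ l i cx, (ρ.toFun t).cl l i cx = c.cl l i cx)

/-- `tcomp(ρ)`: the set of timed computations (from `c₀`) inducing the s-path `ρ`. -/
def tcomp {A : ConjPNTA k} {n : Fin k → ℕ} (c₀ : Config A n) (ρ : SPath A n) :
    Set (TimedComp A n c₀) :=
  {x | Induces x ρ}

/-- `|ρ| = ω` : `ρ` is (induced by) an infinite timed computation from `c₀`. -/
def SPath.IsInfiniteFrom {A : ConjPNTA k} {n : Fin k → ℕ} (c₀ : Config A n) (ρ : SPath A n) : Prop :=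
  ∃ x : TimedComp A n c₀, Induces x ρ ∧ x.Infinite

/-- `|ρ| < ω` : `ρ` is induced by a finite timed computation from `c₀`. -/
def SPath.IsFiniteFrom {A : ConjPNTA k} {n : Fin k → ℕ} (c₀ : Config A n) (ρ : SPath A n) : Prop :=
  ∃ x : TimedComp A n c₀, Induces x ρ ∧ x.Finite

/-- `deadlock(ρ)` : `ρ` is induced by a deadlocked timed computation from `c₀`. -/
def SPath.IsDeadlockedFrom {A : ConjPNTA k} {n : Fin k → ℕ} (c₀ : Config A n) (ρ : SPath A n) : Prop :=
  ∃ x : TimedComp A n c₀, Induces x ρ ∧ x.Deadlocked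

/-! ### IMTL formulae and their continuous-time semantics -/

/-- IMTL path formulae over atomic propositions `α`: built from `⊤` and atoms by
Boolean operators (`∧`, `¬`) and time-constrained until `Φ U_{∼q} Ψ` with
`∼ ∈ {<,≤,>,≥,=}` and `q ∈ ℚ≥0`. -/
inductive IMTL (α : Type) : Type
  | tt
  | atom (a : α)
  | and (φ ψ : IMTL α)
  | not (φ : IMTL α)
  | untl (op : Cmp) (q : ℚ≥0) (φ ψ : IMTL α)

/-- Satisfaction of an IMTL path formula on an s-path, given a valuation of the
atomic propositions on configurations. -/
def satIMTL {A : ConjPNTA k} {n : Fin k → ℕ} {α : Type} (val : α → Config A n → Prop) :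
    IMTL α → SPath A n → Prop
  | .tt, _ => True
  | .atom a, ρ => val a (ρ.toFun 0)
  | .and φ ψ, ρ => satIMTL val φ ρ ∧ satIMTL val ψ ρ
  | .not φ, ρ => ¬ satIMTL val φ ρ
  | .untl op q φ ψ, ρ => ∃ t' : NNReal, (t' : ℝ≥0∞) ≤ ρ.len ∧ op.eval t' (q : NNReal) ∧
      satIMTL val ψ (ρ.suffix t') ∧ ∀ t : NNReal, t < t' → satIMTL val φ (ρ.suffix t)

/-- The six path quantifiers `A, A_inf, A_fin, E, E_inf, E_fin`. -/
inductive PathQ : Type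
  | A | Ainf | Afin | E | Einf | Efin

/-- `(U_1,…,U_k)^{(n_1,…,n_k)} ⊨ Q Φ` for a path quantifier `Q`: quantification over
the s-paths from the initial configuration that are infinite or deadlocked (`A`, `E`),
infinite (`A_inf`, `E_inf`), resp. finite (`A_fin`, `E_fin`). -/
def SatQ (A : ConjPNTA k) (n : Fin k → ℕ) {α : Type} (val : α → Config A n → Prop)
    (Q : PathQ) (Φ : IMTL α) : Prop :=
  match Q with
  | .A => ∀ ρ : SPath A n,
      (ρ.IsInfiniteFrom (initConfig A n) ∨ ρ.IsDeadlockedFrom (initConfig A n)) → satIMTL val Φ ρ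
  | .Ainf => ∀ ρ : SPath A n, ρ.IsInfiniteFrom (initConfig A n) → satIMTL val Φ ρ
  | .Afin => ∀ ρ : SPath A n, ρ.IsFiniteFrom (initConfig A n) → satIMTL val Φ ρ
  | .E => ∃ ρ : SPath A n,
      (ρ.IsInfiniteFrom (initConfig A n) ∨ ρ.IsDeadlockedFrom (initConfig A n)) ∧ satIMTL val Φ ρ
  | .Einf => ∃ ρ : SPath A n, ρ.IsInfiniteFrom (initConfig A n) ∧ satIMTL val Φ ρ
  | .Efin => ∃ ρ : SPath A n, ρ.IsFiniteFrom (initConfig A n) ∧ satIMTL val Φ ρ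

/-- Atomic propositions of the indexed formula `Φ(i_{l₁},…,i_{l_h})`: a quantified
slot `j < h` together with a state (= atomic proposition) of template `l_j`. -/
def Atoms (A : ConjPNTA k) {h : ℕ} (l : Fin h → Fin k) : Type :=
  Σ j : Fin h, A.State (l j)

/-- The valuation of the atoms, given an assignment `inst` of concrete instances to
the quantified slots: `p(l_j, i_{l_j})` holds iff instance `i_{l_j}` of template `l_j`
is in state `p`. -/
def atomVal (A : ConjPNTA k) (n : Fin k → ℕ) {h : ℕ} (l : Fin h → Fin k)
    (inst : ∀ j : Fin h, Fin (n (l j))) : Atoms A l → Config A n → Prop :=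
  fun a c => c.st (l a.1) (inst a.1) = a.2

/-- `(U_1,…,U_k)^{(n_1,…,n_k)} ⊨ ⋀_{i_{l₁},…,i_{l_h}} Q Φ(i_{l₁},…,i_{l_h})`. -/
def SatFormula (A : ConjPNTA k) (n : Fin k → ℕ) {h : ℕ} (l : Fin h → Fin k)
    (Q : PathQ) (Φ : IMTL (Atoms A l)) : Prop :=
  ∀ inst : ∀ j : Fin h, Fin (n (l j)), SatQ A n (atomVal A n l inst) Q Φ

/-! ### Helpers for networks of two templates -/

/-- The size function of the system `(U₁,U₂)^{(a,b)}`. -/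
def two (a b : ℕ) : Fin 2 → ℕ := fun m => if m.val = 0 then a else b

/-- The valuation interpreting the atoms of a formula `Φ(1_t)` over the *first*
instance of template `t`. -/
def valFirst (A : ConjPNTA 2) (n : Fin 2 → ℕ) (t : Fin 2) (hp : 0 < n t) :
    A.State t → Config A n → Prop :=
  fun p c => c.st t ⟨0, hp⟩ = p


/-! ### Cutoffs for two-template systems -/

/-- Cutoff for the template tracked by the formula `Φ(1₂)` (part (i)):
`2` for `E_inf`, `1` for `E_fin`, `2|U₂| + 1` for `E`. -/
def cutoffTracked (A : ConjPNTA 2) : PathQ → ℕ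
  | PathQ.Einf => 2
  | PathQ.Efin => 1
  | PathQ.E => 2 * A.size 1 + 1
  | _ => 1

/-- Cutoff for the untracked template (part (ii)):
`1` for `E_inf`, `1` for `E_fin`, `2|U₂|` for `E`. -/
def cutoffOther (A : ConjPNTA 2) : PathQ → ℕ
  | PathQ.Einf => 1
  | PathQ.Efin => 1
  | PathQ.E => 2 * A.size 1
  | _ => 1

lemma cutoffTracked_pos (A : ConjPNTA 2) (Q : PathQ) : 0 < cutoffTracked A Q := by
  have := A.size_pos 1
  cases Q <;> simp only [cutoffTracked] <;> omega

lemma cutoffOther_pos (A : ConjPNTA 2) (Q : PathQ) : 0 < cutoffOther A Q := by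
  have := A.size_pos 1
  cases Q <;> simp only [cutoffOther] <;> omega

/-! ### Stuttering, reindexings and local computations -/

/-- `y` is a *stuttering* of `x`: it is obtained from `x` by inserting, between
consecutive elements, finitely many intermediate observations of the same states
with clocks advanced by small delays `δ`, without altering the original elements.
The map `m` sends a position of `y` to the position of `x` it refines. -/
def Stuttering {A : ConjPNTA k} {n : Fin k → ℕ} {c₀ : Config A n}
    (y x : TimedComp A n c₀) : Prop :=
  ∃ m : ℕ → ℕ, Monotone m ∧ m 0 = 0 ∧
    (∀ w, (y.seq w).isSome → (x.seq (m w)).isSome) ∧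
    (∀ w, y.seq w = none → ∃ v, x.seq v = none) ∧
    (∀ v, Set.Finite {w | (y.seq w).isSome ∧ m w = v}) ∧
    (∀ v, (x.seq v).isSome → ∃ w, m w = v ∧ y.seq w = x.seq v) ∧
    (∀ w cy ty cx tx, y.seq w = some (cy, ty) → x.seq (m w) = some (cx, tx) →
      tx ≤ ty ∧ cy.st = cx.st ∧ (∀ l i cxk, cy.cl l i cxk = cx.cl l i cxk + (ty - tx)) ∧
      ∀ cx' tx', x.seq (m w + 1) = some (cx', tx') → ty ≤ tx')

/-- A reindexing of positions between a timed computation `x` and a timed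
computation `y` obtained from `x` by collapsing some steps. -/
def Reindex {A : ConjPNTA k} {n n' : Fin k → ℕ} {c₀ : Config A n} {c₀' : Config A n'}
    (x : TimedComp A n c₀) (y : TimedComp A n' c₀') (m : ℕ → ℕ) : Prop :=
  Monotone m ∧ m 0 = 0 ∧
    (∀ v, (x.seq v).isSome → (y.seq (m v)).isSome) ∧
    (∀ w, (y.seq w).isSome → ∃ v, (x.seq v).isSome ∧ m v = w)

/-- The local timed computation of instance `(l, iy)` of `y` coincides (through the
reindexing `m`) with the local timed computation of instance `(l, ix)` of `x`:
same times, same states, same clock values. -/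
def LocalMatch {A : ConjPNTA k} {n n' : Fin k → ℕ} {c₀ : Config A n} {c₀' : Config A n'}
    (x : TimedComp A n c₀) (y : TimedComp A n' c₀') (m : ℕ → ℕ)
    (l : Fin k) (ix : Fin (n l)) (iy : Fin (n' l)) : Prop :=
  ∀ v c t c' t', x.seq v = some (c, t) → y.seq (m v) = some (c', t') →
    t' = t ∧ c'.st l iy = c.st l ix ∧ c'.cl l iy = c.cl l ix

/-- Instance `(l, i)` of `y` follows the idle local computation: it stutters in the
initial state `ŝ_l` with all its clocks equal to the elapsed time. -/
def IdleLocal {A : ConjPNTA k} {n : Fin k → ℕ} {c₀ : Config A n}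
    (y : TimedComp A n c₀) (l : Fin k) (i : Fin (n l)) : Prop :=
  ∀ v c t, y.seq v = some (c, t) → c.st l i = A.init l ∧ ∀ cx, c.cl l i cx = t

/-- The local computation of instance `(l, i)` of `x` is infinite: the instance takes
infinitely many (observable) synchronization steps. -/
def LocalInfinite {A : ConjPNTA k} {n : Fin k → ℕ} {c₀ : Config A n}
    (x : TimedComp A n c₀) (l : Fin k) (i : Fin (n l)) : Prop :=
  ∀ N, ∃ v, N ≤ v ∧ ∃ c t c' t', x.seq v = some (c, t) ∧ x.seq (v + 1) = some (c', t') ∧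
    t' = t ∧ ¬ (c'.st l i = c.st l i ∧ c'.cl l i = c.cl l i)

lemma two_le_two_succ (n : ℕ) (l : Fin 2) : two 1 n l ≤ two 1 (n + 1) l := by
  unfold two; split <;> omega

lemma c2two (A : ConjPNTA 2) {c₂ : ℕ} (hc : c₂ = 2 ∨ c₂ = 2 * A.size 1 + 1) : 1 < c₂ := by
  have := A.size_pos 1
  rcases hc with h | h <;> omega

lemma c2pos (A : ConjPNTA 2) {c₂ : ℕ} (hc : c₂ = 2 ∨ c₂ = 2 * A.size 1 + 1) : 0 < c₂ :=
  Nat.lt_of_lt_of_le Nat.one_pos (Nat.le_of_lt (c2two A hc))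

lemma npos (A : ConjPNTA 2) {c₂ n : ℕ} (hc : c₂ = 2 ∨ c₂ = 2 * A.size 1 + 1) (hn : c₂ ≤ n) :
    0 < n := Nat.lt_of_lt_of_le (c2pos A hc) hn

/-! ### Auxiliary material for the bounding construction (finite case) -/

section Bounding

lemma Config.ext' {k : ℕ} {A : ConjPNTA k} {nn : Fin k → ℕ} {c c' : Config A nn}
    (h1 : c.st = c'.st) (h2 : c.cl = c'.cl) : c = c' := by
  cases c; cases c'; simp_all

lemma two_pos' {n' : ℕ} (hn : 1 ≤ n') (l : Fin 2) : 0 < two 1 n' l := by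
  unfold two; split <;> omega

lemma fin_two11 {l : Fin 2} (i : Fin (two 1 1 l)) : i = ⟨0, two_pos' le_rfl l⟩ := by
  have h : two 1 1 l = 1 := by unfold two; split <;> rfl
  apply Fin.ext
  have := i.isLt
  omega

variable {A : ConjPNTA 2} {n : ℕ}

/-- Projection of a configuration of `(U₁,U₂)^{(1,n)}` to `(U₁,U₂)^{(1,1)}`. -/
def projCfg (hn : 1 ≤ n) (c : Config A (two 1 n)) : Config A (two 1 1) where
  st := fun l _ => c.st l ⟨0, two_pos' hn l⟩
  cl := fun l _ => c.cl l ⟨0, two_pos' hn l⟩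
  inv_sat := fun l _ => c.inv_sat l ⟨0, two_pos' hn l⟩

lemma sigma_ne_of_fst_ne {nn : Fin 2 → ℕ} {l l' : Fin 2} {i : Fin (nn l)} {i' : Fin (nn l')}
    (h : l ≠ l') : (⟨l, i⟩ : Σ h, Fin (nn h)) ≠ ⟨l', i'⟩ := by
  intro he
  exact h (congrArg Sigma.fst he)

lemma sigma_ne_of_val_ne {nn : Fin 2 → ℕ} {l l' : Fin 2} {i : Fin (nn l)} {i' : Fin (nn l')}
    (h : l = l' → i.val ≠ i'.val) : (⟨l, i⟩ : Σ h, Fin (nn h)) ≠ ⟨l', i'⟩ := by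
  intro he
  obtain ⟨h1, h2⟩ := Sigma.mk.inj_iff.mp he
  subst h1
  exact h rfl (congrArg Fin.val (eq_of_heq h2))

/-- Each step of the large network either projects to a step of the small one
(if it is a delay or taken by a first instance), or leaves the projection unchanged. -/
lemma step_projCfg (hn : 1 ≤ n) {c c' : Config A (two 1 n)} {t t' : NNReal}
    (h : Step c c' t t') :
    Step (projCfg hn c) (projCfg hn c') t t' ∨ (projCfg hn c' = projCfg hn c ∧ t' = t) := by
  rcases h with ⟨d, hd, ⟨hst, hcl, hinv⟩, ht⟩ | ⟨⟨l, i, tr, htr, hsrc, hg, hγ, htgt, hres, hoth⟩, ht⟩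
  · left; left
    refine ⟨d, hd, ⟨?_, fun l i xx => hcl l _ xx, fun l i d' hd' => ?_⟩, ht⟩
    · funext l i
      simp only [projCfg, hst]
    · exact hinv l _ d' hd'
  · by_cases hi : i.val = 0
    · -- visible sync step, taken by the first instance of template l
      left; right
      refine ⟨⟨l, ⟨0, two_pos' le_rfl l⟩, tr, htr, ?_, ?_, ?_, ?_, ?_, ?_⟩, ht⟩
      · have : i = ⟨0, two_pos' hn l⟩ := Fin.ext hi
        subst this; exact hsrc
      · have : i = ⟨0, two_pos' hn l⟩ := Fin.ext hi
        subst this; exact hg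
      · intro p hp
        have hp2 := fin_two11 p.2
        have hfst : p.1 ≠ l := by
          intro he
          apply hp
          cases p with
          | mk p1 p2 =>
            subst he
            simp only at hp2
            rw [hp2]
        have hbig : (⟨p.1, (⟨0, two_pos' hn p.1⟩ : Fin (two 1 n p.1))⟩ : Σ h, Fin (two 1 n h)) ≠ ⟨l, i⟩ :=
          sigma_ne_of_fst_ne hfst
        exact hγ _ hbig
      · have : i = ⟨0, two_pos' hn l⟩ := Fin.ext hi
        subst this
        exact htgt
      · have : i = ⟨0, two_pos' hn l⟩ := Fin.ext hi
        subst this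
        intro xx
        exact hres xx
      · intro p hp
        have hp2 := fin_two11 p.2
        have hfst : p.1 ≠ l := by
          intro he
          apply hp
          cases p with
          | mk p1 p2 =>
            subst he
            simp only at hp2
            rw [hp2]
        have hbig : (⟨p.1, (⟨0, two_pos' hn p.1⟩ : Fin (two 1 n p.1))⟩ : Σ h, Fin (two 1 n h)) ≠ ⟨l, i⟩ :=
          sigma_ne_of_fst_ne hfst
        exact hoth _ hbig
    · -- invisible sync step: projections unchanged
      right
      refine ⟨?_, ht⟩
      apply Config.ext'
      · funext l' i'
        have hbig : (⟨l', (⟨0, two_pos' hn l'⟩ : Fin (two 1 n l'))⟩ : Σ h, Fin (two 1 n h)) ≠ ⟨l, i⟩ :=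
          sigma_ne_of_val_ne (fun _ => by simpa using fun h0 => hi h0.symm)
        exact (hoth _ hbig).1
      · funext l' i'
        have hbig : (⟨l', (⟨0, two_pos' hn l'⟩ : Fin (two 1 n l'))⟩ : Σ h, Fin (two 1 n h)) ≠ ⟨l, i⟩ :=
          sigma_ne_of_val_ne (fun _ => by simpa using fun h0 => hi h0.symm)
        exact (hoth _ hbig).2

end Bounding
section Bounding2

variable {A : ConjPNTA 2} {n : ℕ}

open Classical in
/-- Number of "visible" steps (those projecting to steps of the small network)
before position `v`. -/
noncomputable def mIdx (hn : 1 ≤ n) (x : TimedComp A (two 1 n) (initConfig A (two 1 n))) :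
    ℕ → ℕ
  | 0 => 0
  | v + 1 =>
      if (∃ c t c' t', x.seq v = some (c, t) ∧ x.seq (v + 1) = some (c', t') ∧
          Step (projCfg hn c) (projCfg hn c') t t') then mIdx hn x v + 1 else mIdx hn x v

variable (hn : 1 ≤ n) (x : TimedComp A (two 1 n) (initConfig A (two 1 n)))

lemma mIdx_succ_le (v : ℕ) : mIdx hn x (v + 1) ≤ mIdx hn x v + 1 := by
  rw [mIdx]; split <;> omega

lemma mIdx_le_succ (v : ℕ) : mIdx hn x v ≤ mIdx hn x (v + 1) := by
  rw [mIdx]; split <;> omega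

lemma mIdx_mono : Monotone (mIdx hn x) :=
  monotone_nat_of_le_succ (mIdx_le_succ hn x)

lemma mIdx_le_self (v : ℕ) : mIdx hn x v ≤ v := by
  induction v with
  | zero => rw [mIdx]
  | succ v ih => have := mIdx_succ_le hn x v; omega

/-- An invisible step leaves the projection and time unchanged. -/
lemma invisible_eq {v : ℕ} {c c' : Config A (two 1 n)} {t t' : NNReal}
    (hv : x.seq v = some (c, t)) (hv' : x.seq (v + 1) = some (c', t'))
    (hm : mIdx hn x (v + 1) = mIdx hn x v) :
    projCfg hn c' = projCfg hn c ∧ t' = t := by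
  have hstep : Step c c' t t' := x.step v c t c' t' hv hv'
  rcases step_projCfg hn hstep with h | h
  · exfalso
    have : mIdx hn x (v + 1) = mIdx hn x v + 1 := by
      rw [mIdx]; rw [if_pos ⟨c, t, c', t', hv, hv', h⟩]
    omega
  · exact h

/-- A visible step projects to a step of the small network. -/
lemma visible_step {v : ℕ} {c c' : Config A (two 1 n)} {t t' : NNReal}
    (hv : x.seq v = some (c, t)) (hv' : x.seq (v + 1) = some (c', t'))
    (hm : mIdx hn x (v + 1) ≠ mIdx hn x v) :
    Step (projCfg hn c) (projCfg hn c') t t' := by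
  by_cases hvis : (∃ c1 t1 c1' t1', x.seq v = some (c1, t1) ∧ x.seq (v + 1) = some (c1', t1') ∧
      Step (projCfg hn c1) (projCfg hn c1') t1 t1')
  · obtain ⟨c1, t1, c1', t1', h1, h1', hs⟩ := hvis
    rw [hv] at h1; rw [hv'] at h1'
    obtain ⟨rfl, rfl⟩ := Prod.mk_inj.mp (Option.some.inj h1)
    obtain ⟨rfl, rfl⟩ := Prod.mk_inj.mp (Option.some.inj h1')
    exact hs
  · exfalso
    apply hm
    rw [mIdx, if_neg hvis]

lemma x_some_of_le {u v : ℕ} (huv : u ≤ v) (hv : (x.seq v).isSome) : (x.seq u).isSome := by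
  induction v with
  | zero => have : u = 0 := by omega
            subst this; exact hv
  | succ v ih =>
      rcases Nat.lt_or_ge u (v + 1) with h | h
      · exact ih (by omega) (x.downward v hv)
      · have : u = v + 1 := by omega
        subst this; exact hv

/-- Positions with equal `mIdx` have equal projections and times. -/
lemma eq_projPair {u v : ℕ} (huv : u ≤ v) (hv : (x.seq v).isSome)
    (hm : mIdx hn x u = mIdx hn x v) :
    (x.seq u).map (fun p => (projCfg hn p.1, p.2)) =
      (x.seq v).map (fun p => (projCfg hn p.1, p.2)) := by
  induction v with
  | zero => have : u = 0 := by omega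
            subst this; rfl
  | succ v ih =>
      rcases Nat.lt_or_ge u (v + 1) with h | h
      · have hvs : (x.seq v).isSome := x.downward v hv
        have hm1 : mIdx hn x (v + 1) = mIdx hn x v := by
          have h1 := mIdx_mono hn x (show u ≤ v by omega)
          have h2 := mIdx_le_succ hn x v
          omega
        obtain ⟨⟨c, t⟩, hc⟩ := Option.isSome_iff_exists.mp hvs
        obtain ⟨⟨c', t'⟩, hc'⟩ := Option.isSome_iff_exists.mp hv
        obtain ⟨he, hte⟩ := invisible_eq hn x hc hc' hm1
        rw [ih (by omega) hvs (by omega), hc, hc']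
        simp [he, hte]
      · have : u = v + 1 := by omega
        subst this; rfl

end Bounding2
section Bounding3

variable {A : ConjPNTA 2} {n : ℕ}

open Classical in
/-- The collapsed sequence: position `w` holds the projection of the first position
of `x` with `mIdx` equal to `w`. -/
noncomputable def ySeq (hn : 1 ≤ n) (x : TimedComp A (two 1 n) (initConfig A (two 1 n)))
    (w : ℕ) : Option (Config A (two 1 1) × NNReal) :=
  if h : ∃ v, (x.seq v).isSome ∧ mIdx hn x v = w then
    (x.seq (Nat.find h)).map (fun p => (projCfg hn p.1, p.2))
  else none

variable (hn : 1 ≤ n) (x : TimedComp A (two 1 n) (initConfig A (two 1 n)))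

open Classical in
lemma ySeq_eq {v : ℕ} (hv : (x.seq v).isSome) :
    ySeq hn x (mIdx hn x v) = (x.seq v).map (fun p => (projCfg hn p.1, p.2)) := by
  have h : ∃ u, (x.seq u).isSome ∧ mIdx hn x u = mIdx hn x v := ⟨v, hv, rfl⟩
  rw [ySeq, dif_pos h]
  obtain ⟨ha, hma⟩ := Nat.find_spec h
  have hle : Nat.find h ≤ v := Nat.find_min' h ⟨hv, rfl⟩
  rw [eq_projPair hn x hle hv hma]

lemma exists_mIdx_eq {v w : ℕ} (hw : w ≤ mIdx hn x v) : ∃ u, u ≤ v ∧ mIdx hn x u = w := by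
  induction v with
  | zero =>
      refine ⟨0, le_rfl, ?_⟩
      have h0 : mIdx hn x 0 = 0 := rfl
      omega
  | succ v ih =>
      rcases Nat.lt_or_ge (mIdx hn x v) w with h | h
      · have h2 := mIdx_succ_le hn x v
        exact ⟨v + 1, le_rfl, by omega⟩
      · obtain ⟨u, hu, hmu⟩ := ih h
        exact ⟨u, by omega, hmu⟩

open Classical in
/-- The bounded timed computation of `(U₁,U₂)^{(1,1)}`. -/
noncomputable def yComp : TimedComp A (two 1 1) (initConfig A (two 1 1)) where
  seq := ySeq hn x
  zero_def := by
    have h0 : (x.seq 0).isSome := by rw [x.zero_def]; rfl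
    have h := ySeq_eq hn x h0
    have hm0 : mIdx hn x 0 = 0 := rfl
    rw [hm0] at h
    rw [h, x.zero_def]
    rfl
  downward := by
    intro w hw
    rw [ySeq] at hw
    split at hw
    · next h =>
        obtain ⟨ha, hma⟩ := Nat.find_spec h
        obtain ⟨u, huv, hmu⟩ := exists_mIdx_eq hn x
          (show w ≤ mIdx hn x (Nat.find h) by omega)
        have hu : (x.seq u).isSome := x_some_of_le x huv ha
        have := ySeq_eq hn x hu
        rw [hmu] at this
        rw [this]
        obtain ⟨p, hp⟩ := Option.isSome_iff_exists.mp hu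
        rw [hp]
        rfl
    · simp at hw
  step := by
    intro w c t c' t' hw hw'
    rw [ySeq] at hw'
    split at hw'
    · next h' =>
        obtain ⟨hb, hmb⟩ := Nat.find_spec h'
        have hb1 : 1 ≤ Nat.find h' := by
          rcases Nat.eq_zero_or_pos (Nat.find h') with h0 | h0
          · exfalso
            have hz : mIdx hn x 0 = 0 := rfl
            rw [h0] at hmb
            omega
          · exact h0
        obtain ⟨b', hbeq⟩ : ∃ b', Nat.find h' = b' + 1 := ⟨Nat.find h' - 1, by omega⟩
        rw [hbeq] at hb hmb
        have hb' : (x.seq b').isSome := x.downward b' hb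
        have hmb' : mIdx hn x b' = w := by
          have h1 := mIdx_succ_le hn x b'
          have h2 := mIdx_le_succ hn x b'
          have hne : mIdx hn x b' ≠ w + 1 := by
            intro he
            exact Nat.find_min h' (show b' < Nat.find h' by omega) ⟨hb', he⟩
          omega
        obtain ⟨⟨cb, tb⟩, hcb⟩ := Option.isSome_iff_exists.mp hb'
        obtain ⟨⟨cb', tb'⟩, hcb'⟩ := Option.isSome_iff_exists.mp hb
        have hvis : Step (projCfg hn cb) (projCfg hn cb') tb tb' :=
          visible_step hn x hcb hcb' (by omega)
        have he1 : ySeq hn x w = some (projCfg hn cb, tb) := by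
          have hh := ySeq_eq hn x hb'
          rw [hmb'] at hh
          rw [hh, hcb]; rfl
        rw [hbeq, hcb'] at hw'
        rw [he1] at hw
        obtain ⟨rfl, rfl⟩ := Prod.mk_inj.mp (Option.some.inj hw)
        obtain ⟨rfl, rfl⟩ := Prod.mk_inj.mp (Option.some.inj hw')
        exact hvis
    · simp at hw'

end Bounding3
-- STATEMENT 18
theorem bounding_construction_finite (A : ConjPNTA 2) (n : ℕ) (hn : 1 ≤ n)
    (x : TimedComp A (two 1 n) (initConfig A (two 1 n))) (hx : x.Finite) :
    ∃ (y : TimedComp A (two 1 1) (initConfig A (two 1 1))) (m : ℕ → ℕ),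
      y.Finite ∧ Reindex x y m ∧
      LocalMatch x y m 0 ⟨0, Nat.one_pos⟩ ⟨0, Nat.one_pos⟩ ∧
      LocalMatch x y m 1 ⟨0, hn⟩ ⟨0, Nat.one_pos⟩ := by
  refine ⟨yComp hn x, mIdx hn x, ?_, ?_, ?_, ?_⟩
  · -- finiteness
    obtain ⟨V, hV⟩ := hx
    refine ⟨V, ?_⟩
    show ySeq hn x V = none
    rw [ySeq, dif_neg]
    rintro ⟨v, hv, hmv⟩
    have h1 := mIdx_le_self hn x v
    have h2 : (x.seq V).isSome := x_some_of_le x (by omega) hv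
    rw [hV] at h2
    exact absurd h2 (by simp)
  · -- reindexing
    refine ⟨mIdx_mono hn x, rfl, ?_, ?_⟩
    · intro v hv
      show (ySeq hn x (mIdx hn x v)).isSome
      rw [ySeq_eq hn x hv]
      obtain ⟨p, hp⟩ := Option.isSome_iff_exists.mp hv
      rw [hp]; rfl
    · intro w hw
      have hw' : (ySeq hn x w).isSome := hw
      rw [ySeq] at hw'
      split at hw'
      · next h => exact h.elim fun v hv => ⟨v, hv.1, hv.2⟩
      · simp at hw'
  · -- local match for U₁¹
    intro v c t c' t' hxv hyv
    have hv : (x.seq v).isSome := by rw [hxv]; rfl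
    have hy' : ySeq hn x (mIdx hn x v) = some (projCfg hn c, t) := by
      rw [ySeq_eq hn x hv, hxv]; rfl
    have heq : (some (c', t') : Option (Config A (two 1 1) × NNReal))
        = some (projCfg hn c, t) := hyv.symm.trans hy'
    obtain ⟨rfl, rfl⟩ := Prod.mk_inj.mp (Option.some.inj heq)
    exact ⟨rfl, rfl, rfl⟩
  · -- local match for U₂¹
    intro v c t c' t' hxv hyv
    have hv : (x.seq v).isSome := by rw [hxv]; rfl
    have hy' : ySeq hn x (mIdx hn x v) = some (projCfg hn c, t) := by
      rw [ySeq_eq hn x hv, hxv]; rfl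
    have heq : (some (c', t') : Option (Config A (two 1 1) × NNReal))
        = some (projCfg hn c, t) := hyv.symm.trans hy'
    obtain ⟨rfl, rfl⟩ := Prod.mk_inj.mp (Option.some.inj heq)
    exact ⟨rfl, rfl, rfl⟩

end PNTA
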